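/- Let X̃₁ and X̃₂ be strong fuzzy incidence graphs such that the maximum of the η-weights of pairs in X̃₁ is less than or equal to the minimum of the η-weights of pairs in X̃₂. Then the composition X̃₁[X̃₂] is a strong fuzzy incidence graph. -/

import Mathlib

open scoped BigOperators

/-- A fuzzy incidence graph on a finite vertex type `V`.  An (undirected, loopless) edge `xy`
is encoded by the symmetric membership function `rho`, and the incidence pair `(x, xy)`
is encoded by `eta x y` (so `eta x y` is the membership value of the pair consisting of the
vertex `x` and the edge joining `x` and `y`). All membership values lie in `[0,1]`,
`rho xy ≤ min (eps x) (eps y)` and `eta (x, xy) ≤ min (eps x) (rho xy)`. -/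
structure FIG (V : Type) [Fintype V] [DecidableEq V] where
  eps : V → ℝ
  rho : V → V → ℝ
  eta : V → V → ℝ
  eps_nonneg : ∀ x, 0 ≤ eps x
  eps_le_one : ∀ x, eps x ≤ 1
  rho_nonneg : ∀ x y, 0 ≤ rho x y
  rho_symm : ∀ x y, rho x y = rho y x
  rho_le : ∀ x y, rho x y ≤ min (eps x) (eps y)
  rho_irrefl : ∀ x, rho x x = 0
  eta_nonneg : ∀ x y, 0 ≤ eta x y
  eta_le : ∀ x y, eta x y ≤ min (eps x) (rho x y)

namespace FIG

variable {V V₁ V₂ : Type} [Fintype V] [DecidableEq V]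
  [Fintype V₁] [DecidableEq V₁] [Fintype V₂] [DecidableEq V₂]

/-- `(x, xy)` is a pair of the fuzzy incidence graph (i.e. belongs to the support `η*`). -/
def IsPair (G : FIG V) (x y : V) : Prop := 0 < G.eta x y

/-- the minimum of the two pair weights along one edge step of an incidence path -/
def pairMin (G : FIG V) (a b : V) : ℝ := min (G.eta a b) (G.eta b a)

/-- the minimum of the pair weights along the internal steps of a vertex list -/
def chainStrength (G : FIG V) : List V → ℝ
  | [] => 1
  | [_] => 1
  | a :: b :: l => min (G.pairMin a b) (G.chainStrength (b :: l))

/-- The set of incidence strengths of incidence paths from the vertex `x` to the edge `yz`: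
a path is recorded by its (pairwise distinct) sequence of vertices, starting at `x` and ending
at an endpoint of the edge `yz`; its strength is the minimum of the weights of its pairs
(pairs of weight `0` are not genuine pairs, but a list using them has strength `0`, so
including such lists does not alter the supremum below). -/
def pathStrengths (G : FIG V) (x y z : V) : Set ℝ :=
  {s | ∃ l : List V, l.Nodup ∧ l.head? = some x ∧
      ((l.getLast? = some y ∧ s = min (G.chainStrength l) (G.eta y z)) ∨
       (l.getLast? = some z ∧ s = min (G.chainStrength l) (G.eta z y)))}

/-- `ICONN G x y z` is the greatest incidence strength of an incidence path from the
vertex `x` to the edge `yz` (the incidence connectivity `ICONN_G (x, yz)`). -/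
noncomputable def ICONN (G : FIG V) (x y z : V) : ℝ := sSup (G.pathStrengths x y z)

/-- the fuzzy incidence graph obtained by deleting the pair `(a, ab)` -/
def deletePair (G : FIG V) (a b : V) : FIG V where
  eps := G.eps
  rho := G.rho
  eta := fun u v => if u = a ∧ v = b then 0 else G.eta u v
  eps_nonneg := G.eps_nonneg
  eps_le_one := G.eps_le_one
  rho_nonneg := G.rho_nonneg
  rho_symm := G.rho_symm
  rho_le := G.rho_le
  rho_irrefl := G.rho_irrefl
  eta_nonneg := by
    intro u v; (try dsimp only); split
    · exact le_refl 0
    · exact G.eta_nonneg u v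
  eta_le := by
    intro u v; (try dsimp only); split
    · exact le_min (G.eps_nonneg u) (G.rho_nonneg u v)
    · exact G.eta_le u v

/-- The pair `(x, xy)` is strong: its weight is at least the incidence connectivity
between `x` and the edge `xy` in the graph obtained by deleting the pair `(x, xy)`. -/
def IsStrongPair (G : FIG V) (x y : V) : Prop :=
  (G.deletePair x y).ICONN x x y ≤ G.eta x y

/-- a strong fuzzy incidence graph: every pair is strong -/
def Strong (G : FIG V) : Prop := ∀ x y, G.IsPair x y → G.IsStrongPair x y

/-- The pair `(x, xy)` is effective: `η(x, xy) = min (ε x) (ρ xy)`. -/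
def EffectivePair (G : FIG V) (x y : V) : Prop :=
  G.eta x y = min (G.eps x) (G.rho x y)

/-- a fuzzy incidence graph in which every pair is effective -/
def EffectivePairs (G : FIG V) : Prop := ∀ x y, G.IsPair x y → G.EffectivePair x y

/-- The composition `G₁[G₂]` of two fuzzy incidence graphs: `(a₁,b₁)(a₂,b₂)` is an edge
when `a₁ = a₂` and `b₁b₂ ∈ E₂`, or `a₁a₂ ∈ E₁`; a pair of the composition exists when
both corresponding pairs of the relevant factor exist. -/
noncomputable def comp (G₁ : FIG V₁) (G₂ : FIG V₂) : FIG (V₁ × V₂) where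
  eps := fun p => min (G₁.eps p.1) (G₂.eps p.2)
  rho := fun p q =>
    if p.1 = q.1 then min (G₁.eps p.1) (G₂.rho p.2 q.2)
    else if p.2 = q.2 then min (G₁.rho p.1 q.1) (G₂.eps p.2)
    else min (G₁.rho p.1 q.1) (min (G₂.eps p.2) (G₂.eps q.2))
  eta := fun p q =>
    if p.1 = q.1 then
      (if 0 < G₂.eta p.2 q.2 ∧ 0 < G₂.eta q.2 p.2 then
        min (G₁.eps p.1) (G₂.eta p.2 q.2) else 0)
    else if 0 < G₁.eta p.1 q.1 ∧ 0 < G₁.eta q.1 p.1 then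
      (if p.2 = q.2 then min (G₁.eta p.1 q.1) (G₂.eps p.2)
       else min (G₁.eta p.1 q.1) (min (G₂.eps p.2) (G₂.eps q.2)))
    else 0
  eps_nonneg := fun p => le_min (G₁.eps_nonneg p.1) (G₂.eps_nonneg p.2)
  eps_le_one := fun p => min_le_of_left_le (G₁.eps_le_one p.1)
  rho_nonneg := by
    intro p q; (try dsimp only); split
    · exact le_min (G₁.eps_nonneg _) (G₂.rho_nonneg _ _)
    · split
      · exact le_min (G₁.rho_nonneg _ _) (G₂.eps_nonneg _)
      · exact le_min (G₁.rho_nonneg _ _) (le_min (G₂.eps_nonneg _) (G₂.eps_nonneg _))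
  rho_symm := by
    intro p q; (try dsimp only)
    by_cases h1 : p.1 = q.1
    · simp [h1, G₂.rho_symm p.2 q.2]
    · by_cases h2 : p.2 = q.2
      · simp [h1, Ne.symm h1, h2, G₁.rho_symm p.1 q.1]
      · simp [h1, Ne.symm h1, h2, Ne.symm h2, G₁.rho_symm p.1 q.1, min_comm (G₂.eps p.2) (G₂.eps q.2)]
  rho_le := by
    intro p q; (try dsimp only); split
    · rename_i h1
      refine le_min (le_min (min_le_left _ _) (min_le_of_right_le ?_))
        (le_min (h1 ▸ min_le_left _ _) (min_le_of_right_le ?_))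
      · exact le_trans (G₂.rho_le p.2 q.2) (min_le_left _ _)
      · exact le_trans (G₂.rho_le p.2 q.2) (min_le_right _ _)
    · split
      · rename_i h1 h2
        refine le_min (le_min (min_le_of_left_le ?_) (min_le_right _ _))
          (le_min (min_le_of_left_le ?_) (h2 ▸ min_le_right _ _))
        · exact le_trans (G₁.rho_le p.1 q.1) (min_le_left _ _)
        · exact le_trans (G₁.rho_le p.1 q.1) (min_le_right _ _)
      · refine le_min (le_min (min_le_of_left_le ?_) (min_le_of_right_le (min_le_left _ _)))
          (le_min (min_le_of_left_le ?_) (min_le_of_right_le (min_le_right _ _)))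
        · exact le_trans (G₁.rho_le p.1 q.1) (min_le_left _ _)
        · exact le_trans (G₁.rho_le p.1 q.1) (min_le_right _ _)
  rho_irrefl := by
    intro p; (try dsimp only)
    rw [if_pos rfl, G₂.rho_irrefl]
    exact min_eq_right (G₁.eps_nonneg p.1)
  eta_nonneg := by
    intro p q; (try dsimp only); split
    · split
      · exact le_min (G₁.eps_nonneg _) (G₂.eta_nonneg _ _)
      · exact le_refl 0
    · split
      · split
        · exact le_min (G₁.eta_nonneg _ _) (G₂.eps_nonneg _)
        · exact le_min (G₁.eta_nonneg _ _) (le_min (G₂.eps_nonneg _) (G₂.eps_nonneg _))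
      · exact le_refl 0
  eta_le := by
    intro p q; (try dsimp only); split
    · split
      · refine le_min (le_min (min_le_left _ _) (min_le_of_right_le ?_))
          (le_min (min_le_left _ _) (min_le_of_right_le ?_))
        · exact le_trans (G₂.eta_le p.2 q.2) (min_le_left _ _)
        · exact le_trans (G₂.eta_le p.2 q.2) (min_le_right _ _)
      · exact le_min (le_min (G₁.eps_nonneg _) (G₂.eps_nonneg _))
          (le_min (G₁.eps_nonneg _) (G₂.rho_nonneg _ _))
    · split
      · split
        · rename_i hg h2
          refine le_min (le_min (min_le_of_left_le ?_) (min_le_right _ _))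
            (le_min (min_le_of_left_le ?_) (min_le_right _ _))
          · exact le_trans (G₁.eta_le p.1 q.1) (min_le_left _ _)
          · exact le_trans (G₁.eta_le p.1 q.1) (min_le_right _ _)
        · refine le_min (le_min (min_le_of_left_le ?_) (min_le_of_right_le (min_le_left _ _)))
            (le_min (min_le_of_left_le ?_) (min_le_right _ _))
          · exact le_trans (G₁.eta_le p.1 q.1) (min_le_left _ _)
          · exact le_trans (G₁.eta_le p.1 q.1) (min_le_right _ _)
      · split
        · exact le_min (le_min (G₁.eps_nonneg _) (G₂.eps_nonneg _))
            (le_min (G₁.rho_nonneg _ _) (G₂.eps_nonneg _))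
        · exact le_min (le_min (G₁.eps_nonneg _) (G₂.eps_nonneg _))
            (le_min (G₁.rho_nonneg _ _) (le_min (G₂.eps_nonneg _) (G₂.eps_nonneg _)))
/-!
An incidence path of strength at least `s` from `x` to the edge `xy` is a connection from `x`
to `y` in the `s`-cut of `G` (the graph of the edges both of whose pairs weigh at least `s`),
closed off by `η(y, xy) ≥ s`. So `(x, xy)` is strong iff every level `s ≤ η(y, xy)` at which
`x` and `y` stay connected once `(x, xy)` is deleted satisfies `s ≤ η(x, xy)`.

Let `(p, pq)` be a pair of `G₁[G₂]` and take such a connection at level `s`. The `ε`-factors of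
`η(p, pq)` are bounded through `η(q, pq)`. If `p.1 = q.1`, either the connection takes a
horizontal step, whose weight is a weight of `G₁` and hence at most `η₂(p.2, p.2q.2)`, or it
stays in the fibre over `p.1` and projects to a connection in `G₂` avoiding the deleted pair.
If `p.1 ≠ q.1`, either the connection steps over the edge `p.1q.1`, which bounds `s` by
`η₁(p.1, p.1q.1)` at once, or its projection to `G₁` avoids that edge. In the remaining cases
strength of the factor finishes the argument.
-/

theorem eta_le_eps_left (G : FIG V) (x y : V) : G.eta x y ≤ G.eps x :=
  (G.eta_le x y).trans (min_le_left _ _)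

theorem eta_le_eps_right (G : FIG V) (x y : V) : G.eta x y ≤ G.eps y :=
  (G.eta_le x y).trans <| (min_le_right _ _).trans <| (G.rho_le x y).trans (min_le_right _ _)

theorem eta_le_one (G : FIG V) (x y : V) : G.eta x y ≤ 1 :=
  (G.eta_le_eps_left x y).trans (G.eps_le_one x)

theorem eta_self (G : FIG V) (x : V) : G.eta x x = 0 :=
  le_antisymm ((G.eta_le x x).trans ((min_le_right _ _).trans (G.rho_irrefl x).le))
    (G.eta_nonneg x x)

theorem IsPair.ne {G : FIG V} {x y : V} (h : G.IsPair x y) : x ≠ y := by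
  rintro rfl
  exact h.ne' (G.eta_self x)

theorem pairMin_comm (G : FIG V) (u v : V) : G.pairMin u v = G.pairMin v u :=
  min_comm _ _

theorem pairMin_congr (G : FIG V) {u v a b : V} (h : s(u, v) = s(a, b)) :
    G.pairMin u v = G.pairMin a b := by
  rcases Sym2.eq_iff.mp h with ⟨rfl, rfl⟩ | ⟨rfl, rfl⟩
  · rfl
  · exact G.pairMin_comm _ _

theorem deletePair_eta_of_ne (G : FIG V) {a b u v : V} (h : u ≠ a) :
    (G.deletePair a b).eta u v = G.eta u v :=
  if_neg fun h' => h h'.1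

theorem deletePair_pairMin_le (G : FIG V) (a b u v : V) :
    (G.deletePair a b).pairMin u v ≤ G.pairMin u v := by
  unfold pairMin deletePair
  dsimp only
  gcongr <;> split_ifs <;> simp [G.eta_nonneg]

theorem deletePair_pairMin_of_eq (G : FIG V) {a b u v : V} (h : s(u, v) = s(a, b)) :
    (G.deletePair a b).pairMin u v = 0 := by
  rw [pairMin_congr _ h]
  exact le_antisymm ((min_le_left _ _).trans (if_pos ⟨rfl, rfl⟩).le)
    (le_min ((G.deletePair a b).eta_nonneg a b) ((G.deletePair a b).eta_nonneg b a))

theorem deletePair_pairMin_of_ne (G : FIG V) {a b u v : V} (h : s(u, v) ≠ s(a, b)) :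
    (G.deletePair a b).pairMin u v = G.pairMin u v := by
  rw [Ne, Sym2.eq_iff, not_or] at h
  unfold pairMin deletePair
  dsimp only
  rw [if_neg h.1, if_neg fun h' => h.2 ⟨h'.2, h'.1⟩]

theorem _root_.SimpleGraph.Reachable.map_of_adj {α β : Type*} {G : SimpleGraph α}
    {H : SimpleGraph β} (f : α → β) (P : α → Prop)
    (h : ∀ u v, P u → G.Adj u v → P v ∧ H.Reachable (f u) (f v)) {x y : α} (hx : P x)
    (hr : G.Reachable x y) : H.Reachable (f x) (f y) := by
  rw [SimpleGraph.reachable_iff_reflTransGen] at hr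
  suffices P y ∧ H.Reachable (f x) (f y) from this.2
  induction hr with
  | refl => exact ⟨hx, .refl _⟩
  | tail _ hadj ih =>
    obtain ⟨hP, hR⟩ := h _ _ ih.1 hadj
    exact ⟨hP, ih.2.trans hR⟩

def cutGraph (G : FIG V) (s : ℝ) : SimpleGraph V where
  Adj u v := u ≠ v ∧ s ≤ G.pairMin u v
  symm := ⟨fun _ _ h => ⟨h.1.symm, (G.pairMin_comm _ _) ▸ h.2⟩⟩
  loopless := ⟨fun _ h => h.1 rfl⟩

theorem cutGraph_adj {G : FIG V} {s : ℝ} {u v : V} :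
    (G.cutGraph s).Adj u v ↔ u ≠ v ∧ s ≤ G.pairMin u v :=
  Iff.rfl

theorem reachable_of_le_chainStrength (G : FIG V) {s : ℝ} :
    ∀ {x y : V} {t : List V}, s ≤ G.chainStrength (x :: t) → (x :: t).getLast? = some y →
      (G.cutGraph s).Reachable x y
  | x, y, [], _, hlast => by
    obtain rfl : x = y := by simpa using hlast
    rfl
  | x, y, b :: t, hs, hlast => by
    have hstep : (G.cutGraph s).Reachable x b := by
      by_cases hxb : x = b
      · rw [hxb]
      · exact SimpleGraph.Adj.reachable (cutGraph_adj.mpr ⟨hxb, hs.trans (min_le_left _ _)⟩)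
    exact hstep.trans <| reachable_of_le_chainStrength G (hs.trans (min_le_right _ _))
      (by rwa [List.getLast?_cons_cons] at hlast)

theorem le_chainStrength_support (G : FIG V) {s : ℝ} (hs : s ≤ 1) :
    ∀ {x y : V} (w : (G.cutGraph s).Walk x y), s ≤ G.chainStrength w.support
  | _, _, .nil => hs
  | _, _, .cons hadj w => by
    rw [SimpleGraph.Walk.support_cons, ← w.cons_tail_support]
    exact le_min (cutGraph_adj.mp hadj).2 (w.cons_tail_support ▸ le_chainStrength_support G hs w)

theorem le_ICONN_of_reachable (G : FIG V) {s : ℝ} {x y : V} (hs : s ≤ G.eta y x)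
    (h : (G.cutGraph s).Reachable x y) : s ≤ G.ICONN x x y := by
  refine h.elim_path fun ⟨w, hw⟩ => ?_
  have hbdd : BddAbove (G.pathStrengths x x y) := by
    refine ⟨1, ?_⟩
    rintro _ ⟨l, -, -, ⟨-, rfl⟩ | ⟨-, rfl⟩⟩ <;> exact (min_le_right _ _).trans (G.eta_le_one _ _)
  have hmem : min (G.chainStrength w.support) (G.eta y x) ∈ G.pathStrengths x x y :=
    ⟨w.support, hw.support_nodup, by cases w <;> simp,
      Or.inr ⟨by simp [List.getLast?_eq_some_getLast w.support_ne_nil], rfl⟩⟩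
  exact (le_min (G.le_chainStrength_support (hs.trans (G.eta_le_one y x)) w) hs).trans
    (le_csSup hbdd hmem)

theorem Strong.le_eta_of_reachable {G : FIG V} (hG : G.Strong) {s : ℝ} {x y : V}
    (hxy : G.IsPair x y) (hs : s ≤ G.eta y x)
    (h : ((G.deletePair x y).cutGraph s).Reachable x y) : s ≤ G.eta x y := by
  refine le_trans ?_ (hG x y hxy)
  exact le_ICONN_of_reachable _ (by rwa [deletePair_eta_of_ne _ hxy.ne.symm]) h

theorem strong_of_le_eta_of_reachable {G : FIG V}
    (h : ∀ x y (s : ℝ), G.IsPair x y → s ≤ G.eta y x →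
      ((G.deletePair x y).cutGraph s).Reachable x y → s ≤ G.eta x y) : G.Strong := by
  intro x y hxy
  refine Real.sSup_le ?_ (G.eta_nonneg x y)
  rintro _ ⟨l, -, hhead, ⟨-, rfl⟩ | ⟨hlast, rfl⟩⟩
  · exact (min_le_right _ _).trans ((if_pos ⟨rfl, rfl⟩).trans_le (G.eta_nonneg x y))
  · obtain ⟨t, rfl⟩ : ∃ t, l = x :: t := by
      cases l <;> simp_all
    rw [deletePair_eta_of_ne _ hxy.ne.symm]
    exact h x y _ hxy (min_le_right _ _)
      ((G.deletePair x y).reachable_of_le_chainStrength (min_le_left _ _) hlast)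

section Comp

variable (G₁ : FIG V₁) (G₂ : FIG V₂) {p q : V₁ × V₂}

theorem isPair_of_isPair_comp_of_fst_eq (hpq : (G₁.comp G₂).IsPair p q) (h : p.1 = q.1) :
    G₂.IsPair p.2 q.2 ∧ G₂.IsPair q.2 p.2 := by
  simp only [IsPair, comp, if_pos h] at hpq ⊢
  split_ifs at hpq with hc
  exacts [hc, absurd hpq (lt_irrefl 0)]

theorem isPair_of_isPair_comp_of_fst_ne (hpq : (G₁.comp G₂).IsPair p q) (h : p.1 ≠ q.1) :
    G₁.IsPair p.1 q.1 ∧ G₁.IsPair q.1 p.1 := by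
  simp only [IsPair, comp, if_neg h] at hpq ⊢
  split_ifs at hpq with hc
  exacts [hc, hc, absurd hpq (lt_irrefl 0)]

theorem comp_eta_of_fst_eq (h : p.1 = q.1) (hp : G₂.IsPair p.2 q.2) (hq : G₂.IsPair q.2 p.2) :
    (G₁.comp G₂).eta p q = min (G₁.eps p.1) (G₂.eta p.2 q.2) := by
  have hc : 0 < G₂.eta p.2 q.2 ∧ 0 < G₂.eta q.2 p.2 := ⟨hp, hq⟩
  simp only [comp, if_pos h, if_pos hc]

theorem comp_eta_of_fst_ne (h : p.1 ≠ q.1) (hp : G₁.IsPair p.1 q.1) (hq : G₁.IsPair q.1 p.1) :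
    (G₁.comp G₂).eta p q = min (G₁.eta p.1 q.1) (min (G₂.eps p.2) (G₂.eps q.2)) := by
  have hc : 0 < G₁.eta p.1 q.1 ∧ 0 < G₁.eta q.1 p.1 := ⟨hp, hq⟩
  simp only [comp, if_neg h, if_pos hc]
  split_ifs with h₂
  · rw [h₂, min_self]
  · rfl

theorem comp_eta_le_of_fst_eq (h : p.1 = q.1) : (G₁.comp G₂).eta p q ≤ G₂.eta p.2 q.2 := by
  simp only [comp, if_pos h]
  split_ifs
  · exact min_le_right _ _
  · exact G₂.eta_nonneg _ _

theorem comp_eta_le_of_fst_ne (h : p.1 ≠ q.1) : (G₁.comp G₂).eta p q ≤ G₁.eta p.1 q.1 := by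
  simp only [comp, if_neg h]
  split_ifs
  · exact min_le_left _ _
  · exact min_le_left _ _
  · exact G₁.eta_nonneg _ _

theorem comp_pairMin_le_of_fst_eq (h : p.1 = q.1) :
    (G₁.comp G₂).pairMin p q ≤ G₂.pairMin p.2 q.2 :=
  min_le_min (comp_eta_le_of_fst_eq G₁ G₂ h) (comp_eta_le_of_fst_eq G₁ G₂ h.symm)

theorem comp_pairMin_le_of_fst_ne (h : p.1 ≠ q.1) :
    (G₁.comp G₂).pairMin p q ≤ G₁.pairMin p.1 q.1 :=
  min_le_min (comp_eta_le_of_fst_ne G₁ G₂ h) (comp_eta_le_of_fst_ne G₁ G₂ h.symm)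

theorem comp_le_eta_of_reachable_of_fst_eq (h₂ : G₂.Strong)
    (hle : ∀ a b : V₁, ∀ c d : V₂, G₁.IsPair a b → G₂.IsPair c d → G₁.eta a b ≤ G₂.eta c d)
    {s : ℝ} (hpq : (G₁.comp G₂).IsPair p q) (h : p.1 = q.1) (hs : s ≤ (G₁.comp G₂).eta q p)
    (hr : (((G₁.comp G₂).deletePair p q).cutGraph s).Reachable p q) :
    s ≤ (G₁.comp G₂).eta p q := by
  obtain ⟨hp, hq⟩ := isPair_of_isPair_comp_of_fst_eq G₁ G₂ hpq h
  rw [comp_eta_of_fst_eq G₁ G₂ h hp hq]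
  refine le_min ((hs.trans (eta_le_eps_right _ q p)).trans (min_le_left _ _)) ?_
  by_contra! hlt
  have hs0 : 0 < s := hp.trans hlt
  have hs₂ : s ≤ G₂.eta q.2 p.2 := hs.trans (comp_eta_le_of_fst_eq G₁ G₂ h.symm)
  refine hlt.not_ge (h₂.le_eta_of_reachable hp hs₂ ?_)
  refine hr.map_of_adj Prod.snd (fun u => u.1 = p.1) (fun u v hu huv => ?_) rfl
  obtain ⟨hne, hsuv⟩ := cutGraph_adj.mp huv
  have hsuv' := hsuv.trans (deletePair_pairMin_le _ p q u v)
  have hv : u.1 = v.1 := by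
    by_contra hv
    have hs₁ : s ≤ G₁.eta u.1 v.1 :=
      hsuv'.trans ((comp_pairMin_le_of_fst_ne G₁ G₂ hv).trans (min_le_left _ _))
    exact hlt.not_ge (hs₁.trans (hle _ _ _ _ (hs0.trans_le hs₁) hp))
  refine ⟨hv ▸ hu, SimpleGraph.Adj.reachable (cutGraph_adj.mpr
    ⟨fun e => hne (Prod.ext hv e), ?_⟩)⟩
  -- within the fibre over `p.1`, the only copy of the pair `(p.2, q.2)` is the deleted one
  have hsym : s(u.2, v.2) ≠ s(p.2, q.2) := by
    intro heq
    refine hs0.not_ge (hsuv.trans_eq (deletePair_pairMin_of_eq _ ?_))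
    rcases Sym2.eq_iff.mp heq with ⟨e₁, e₂⟩ | ⟨e₁, e₂⟩
    · exact Sym2.eq_iff.mpr (.inl ⟨Prod.ext hu e₁, Prod.ext (hv.symm.trans (hu.trans h)) e₂⟩)
    · exact Sym2.eq_iff.mpr (.inr ⟨Prod.ext (hu.trans h) e₁, Prod.ext (hv.symm.trans hu) e₂⟩)
  rw [deletePair_pairMin_of_ne _ hsym]
  exact hsuv'.trans (comp_pairMin_le_of_fst_eq G₁ G₂ hv)

theorem comp_le_eta_of_reachable_of_fst_ne (h₁ : G₁.Strong) {s : ℝ}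
    (hpq : (G₁.comp G₂).IsPair p q) (h : p.1 ≠ q.1) (hs : s ≤ (G₁.comp G₂).eta q p)
    (hr : (((G₁.comp G₂).deletePair p q).cutGraph s).Reachable p q) :
    s ≤ (G₁.comp G₂).eta p q := by
  obtain ⟨hp, hq⟩ := isPair_of_isPair_comp_of_fst_ne G₁ G₂ hpq h
  have hps : s ≤ (G₁.comp G₂).eps p := hs.trans (eta_le_eps_right _ q p)
  have hqs : s ≤ (G₁.comp G₂).eps q := hs.trans (eta_le_eps_left _ q p)
  rw [comp_eta_of_fst_ne G₁ G₂ h hp hq]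
  refine le_min ?_ (le_min (hps.trans (min_le_right _ _)) (hqs.trans (min_le_right _ _)))
  by_contra! hlt
  have hs₁ : s ≤ G₁.eta q.1 p.1 := hs.trans (comp_eta_le_of_fst_ne G₁ G₂ (Ne.symm h))
  refine hlt.not_ge (h₁.le_eta_of_reachable hp hs₁ ?_)
  refine hr.map_of_adj Prod.fst (fun _ => True) (fun u v _ huv => ⟨trivial, ?_⟩) trivial
  by_cases hv : u.1 = v.1
  · rw [hv]
  have hsuv : s ≤ G₁.pairMin u.1 v.1 := (cutGraph_adj.mp huv).2.trans
    ((deletePair_pairMin_le _ p q u v).trans (comp_pairMin_le_of_fst_ne G₁ G₂ hv))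
  have hsym : s(u.1, v.1) ≠ s(p.1, q.1) := fun heq =>
    hlt.not_ge (hsuv.trans ((pairMin_congr _ heq).trans_le (min_le_left _ _)))
  exact SimpleGraph.Adj.reachable
    (cutGraph_adj.mpr ⟨hv, (deletePair_pairMin_of_ne _ hsym).symm ▸ hsuv⟩)

end Comp

/-- **Theorem 38.** If every pair weight of the strong fuzzy incidence graph `G₁` is at
most every pair weight of the strong fuzzy incidence graph `G₂`, then the composition
`G₁[G₂]` is a strong fuzzy incidence graph. -/
theorem comp_strong_of_le (G₁ : FIG V₁) (G₂ : FIG V₂)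
    (h₁ : G₁.Strong) (h₂ : G₂.Strong)
    (hle : ∀ a b : V₁, ∀ c d : V₂,
      G₁.IsPair a b → G₂.IsPair c d → G₁.eta a b ≤ G₂.eta c d) :
    (G₁.comp G₂).Strong := by
  refine strong_of_le_eta_of_reachable fun p q s hpq hs hr => ?_
  by_cases h : p.1 = q.1
  · exact comp_le_eta_of_reachable_of_fst_eq G₁ G₂ h₂ hle hpq h hs hr
  · exact comp_le_eta_of_reachable_of_fst_ne G₁ G₂ h₁ hpq h hs hr

end FIG
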